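/- Let 𝒜 be a weak deterministic Büchi automaton over the alphabet Σ ∪ {⋆}, and let 𝐯 be any infinite word over Σ^d ∪ {⋆}. Then par(𝒜) accepts 𝐯 if and only if 𝒜 accepts seq(𝐯). -/

import Mathlib

/-- A deterministic Büchi automaton over alphabet `A` with states `Q`. -/
structure DBA (A : Type) (Q : Type) where
  delta : Q → A → Q
  init : Q
  F : Set Q

namespace DBA

variable {A Q : Type}

/-- The transition function extended to finite words. -/
def deltaStar (M : DBA A Q) : Q → List A → Q
  | q, [] => q
  | q, a :: u => deltaStar M (M.delta q a) u

/-- The run of `M` on the infinite word `w`. -/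
def run (M : DBA A Q) (w : ℕ → A) : ℕ → Q
  | 0 => M.init
  | n + 1 => M.delta (run M w n) (w n)

/-- `M` accepts `w` if some accepting state occurs infinitely often in the run. -/
def Accepts (M : DBA A Q) (w : ℕ → A) : Prop :=
  ∃ q ∈ M.F, ∀ N : ℕ, ∃ n, N ≤ n ∧ run M w n = q

/-- The ω-language of `M`. -/
def Lang (M : DBA A Q) : Set (ℕ → A) := {w | M.Accepts w}

/-- `M` with initial state changed to `q`. -/
def start (M : DBA A Q) (q : Q) : DBA A Q := { M with init := q }

/-- `q'` is accessible from `q` (by a nonempty word). -/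
def Reach (M : DBA A Q) (q q' : Q) : Prop :=
  ∃ u : List A, u ≠ [] ∧ deltaStar M q u = q'

/-- `M` is weak: `F` is a union of strongly connected components. -/
def Weak (M : DBA A Q) : Prop :=
  ∀ q ∈ M.F, ∀ q', M.Reach q q' → M.Reach q' q → q' ∈ M.F

/-- `M` is minimal: distinct states recognize distinct languages. -/
def Minimal (M : DBA A Q) : Prop :=
  ∀ q q' : Q, q ≠ q' → (M.start q).Lang ≠ (M.start q').Lang

end DBA

/-- Concatenation of a finite word and an infinite word. -/
def cat {A : Type} (u : List A) (w : ℕ → A) : ℕ → A :=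
  fun n => if h : n < u.length then u.get ⟨n, h⟩ else w (n - u.length)

/-- The value `⟨v⟩ = Σ_{i<|v|} v[i]·b^(|v|-1-i)` of a finite digit word. -/
noncomputable def natVal (b : ℕ) (v : List (Fin b)) : ℝ :=
  ∑ i : Fin v.length, ((v.get i : ℕ) : ℝ) * (b : ℝ) ^ (v.length - 1 - (i : ℕ))

/-- The fractional value `⟨w⟩_f = Σ_{i≥0} w[i]·b^(-i-1)` of an infinite digit word. -/
noncomputable def fracVal (b : ℕ) (w : ℕ → Fin b) : ℝ :=
  ∑' i : ℕ, ((w i : ℕ) : ℝ) * (b : ℝ) ^ (-(i : ℤ) - 1)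

/-- The word `𝐮⋆𝐰` over `Σ^d ∪ {⋆}`; `none` is the separator `⋆`. -/
def encWord {b d : ℕ} (u : List (Fin d → Fin b)) (w : ℕ → Fin d → Fin b) :
    ℕ → Option (Fin d → Fin b) :=
  cat (u.map some ++ [none]) (fun n => some (w n))

/-- The vector of reals encoded by `𝐮⋆𝐰`. -/
noncomputable def vecVal {b d : ℕ} (u : List (Fin d → Fin b)) (w : ℕ → Fin d → Fin b) :
    Fin d → ℝ :=
  fun i => natVal b (u.map fun t => t i) + fracVal b (fun n => w n i)

/-- A language of words over `Σ^d ∪ {⋆}` is saturated if membership only depends on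
the encoded vector of reals. -/
def Saturated {b d : ℕ} (L : Set (ℕ → Option (Fin d → Fin b))) : Prop :=
  ∀ (u : List (Fin d → Fin b)) (w : ℕ → Fin d → Fin b)
    (u' : List (Fin d → Fin b)) (w' : ℕ → Fin d → Fin b),
    vecVal u w = vecVal u' w' → encWord u w ∈ L → encWord u' w' ∈ L

/-- The parallelization `par(𝒜)` of an automaton over `Σ ∪ {⋆}`. -/
def parDBA {Q : Type} {b : ℕ} (d : ℕ) (M : DBA (Option (Fin b)) Q) :
    DBA (Option (Fin d → Fin b)) Q where
  delta := fun q x =>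
    match x with
    | none => M.delta q none
    | some t => M.deltaStar q (List.ofFn fun i => some (t i))
  init := M.init
  F := M.F

/-- Fill the `f`-th component of a tuple of `Σ^□_f` with the digit `z`. -/
def fixTuple {b d : ℕ} (f : Fin d) (z : Fin b) (t : {i : Fin d // i ≠ f} → Fin b) :
    Fin d → Fin b :=
  fun i => if h : i = f then z else t ⟨i, h⟩

/-- The automaton `𝒜^{z@f}` over `Σ^□_f ∪ {⋆}`; a letter of `Σ^□_f` is represented by
its tuple of non-`f` components (the `f`-th component being `□`). -/
def fixDBA {Q : Type} {b d : ℕ} (M : DBA (Option (Fin d → Fin b)) Q) (f : Fin d) (z : Fin b) :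
    DBA (Option ({i : Fin d // i ≠ f} → Fin b)) Q where
  delta := fun q x =>
    match x with
    | none => M.delta q none
    | some t => M.delta q (some (fixTuple f z t))
  init := M.init
  F := M.F

/-- `fix_{□@f}(𝐰)`: replace the `f`-th component of every non-`⋆` letter by `□`. -/
def eraseComp {b d : ℕ} (f : Fin d) (w : ℕ → Option (Fin d → Fin b)) :
    ℕ → Option ({i : Fin d // i ≠ f} → Fin b) :=
  fun n => (w n).map fun t i => t i.val

/-- `fix_{z@f}(𝐰)`: replace the `f`-th component (`□`) of every non-`⋆` letter by `z`. -/
def fillComp {b d : ℕ} (f : Fin d) (z : Fin b) (w : ℕ → Option ({i : Fin d // i ≠ f} → Fin b)) :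
    ℕ → Option (Fin d → Fin b) :=
  fun n => (w n).map (fixTuple f z)

/-- The automaton `𝒜^{seq z}`, over alphabet `Σ ∪ {□,⋆}` (here `none` is `⋆` and
`some none` is `□`), with states `(Q × {0,…,d−1}) ∪ {⊥}` (`none` is `⊥`). -/
def seqDBA {Q : Type} {b : ℕ} (d : ℕ) (hd : 0 < d) (M : DBA (Option (Fin b)) Q) (z : Fin b) :
    DBA (Option (Option (Fin b))) (Option (Q × Fin d)) where
  delta := fun s x =>
    match s, x with
    | none, _ => none
    | some (q, i), none => some (M.delta q none, i)
    | some (q, i), some (some a) =>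
        if h : (i : ℕ) + 1 < d then some (M.delta q (some a), ⟨(i : ℕ) + 1, h⟩) else none
    | some (q, i), some none =>
        if (i : ℕ) = d - 1 then some (M.delta q (some z), ⟨0, hd⟩) else none
  init := some (M.init, ⟨0, hd⟩)
  F := {s | ∃ q ∈ M.F, ∃ i : Fin d, s = some (q, i)}

/-- Auxiliary function for flattening an infinite word of blocks:
`flatAux blk v n` is the pair (block index, offset inside the block) of position `n`. -/
def flatAux {A B : Type} (blk : A → List B) (v : ℕ → A) : ℕ → ℕ × ℕ
  | 0 => (0, 0)
  | n + 1 =>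
      let p := flatAux blk v n
      if p.2 + 1 < (blk (v p.1)).length then (p.1, p.2 + 1) else (p.1 + 1, 0)

/-- Flattening of an infinite word of (nonempty) blocks. -/
def flatten {A B : Type} [Inhabited B] (blk : A → List B) (v : ℕ → A) : ℕ → B :=
  fun n => (blk (v (flatAux blk v n).1)).getD (flatAux blk v n).2 default

/-- The block of a letter of `Σ^d ∪ {⋆}`: a `d`-tuple becomes its list of components,
`⋆` stays a single letter. -/
def parBlock {b d : ℕ} : Option (Fin d → Fin b) → List (Option (Fin b))
  | none => [none]
  | some t => List.ofFn fun i => some (t i)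

/-- `seq(𝐯)`: the sequentialization of an infinite word over `Σ^d ∪ {⋆}`. -/
def seqWord {b d : ℕ} (v : ℕ → Option (Fin d → Fin b)) : ℕ → Option (Fin b) :=
  flatten parBlock v

/-- The block of a letter of `Σ^□_f ∪ {⋆}`, as a word over `Σ ∪ {□,⋆}`. -/
def sqBlock {b d : ℕ} (f : Fin d) :
    Option ({i : Fin d // i ≠ f} → Fin b) → List (Option (Option (Fin b)))
  | none => [none]
  | some t => List.ofFn fun i : Fin d =>
      if h : i = f then some none else some (some (t ⟨i, h⟩))

/-- Number of non-`⋆` letters among the first `n` letters of `w`. -/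
def digitCount {b : ℕ} (w : ℕ → Option (Fin b)) : ℕ → ℕ
  | 0 => 0
  | n + 1 => digitCount w n + (if w n = none then 0 else 1)

/-!
The run of `par(𝒜)` on `𝐯` is the run of `𝒜` on `seq(𝐯)` observed at block boundaries, so a
state recurring in the former recurs in the latter. Conversely, by pigeonhole some state `p`
recurs at block boundaries; `p` and a recurring accepting state `q` of the full run then reach
each other, so `p` is accepting because `𝒜` is weak.
-/

open Filter

namespace DBA

variable {A B Q : Type}

theorem deltaStar_append (M : DBA A Q) (q : Q) (u u' : List A) :
    M.deltaStar q (u ++ u') = M.deltaStar (M.deltaStar q u) u' := by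
  induction u generalizing q with
  | nil => rfl
  | cons a u ih => exact ih _

theorem run_add (M : DBA A Q) (w : ℕ → A) (m k : ℕ) :
    M.run w (m + k) = M.deltaStar (M.run w m) (List.ofFn fun i : Fin k => w (m + i)) := by
  induction k with
  | zero => rfl
  | succ k ih =>
    rw [List.ofFn_succ', List.concat_eq_append, deltaStar_append]
    simp only [Fin.val_castSucc, Fin.val_last, ← ih]
    rfl

theorem accepts_iff_frequently (M : DBA A Q) (w : ℕ → A) :
    M.Accepts w ↔ ∃ q ∈ M.F, ∃ᶠ n in atTop, M.run w n = q := by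
  simp only [Accepts, frequently_atTop]

theorem reach_run_of_lt (M : DBA A Q) (w : ℕ → A) {m n : ℕ} (hmn : m < n) :
    M.Reach (M.run w m) (M.run w n) := by
  obtain ⟨k, rfl⟩ := Nat.exists_eq_add_of_lt hmn
  refine ⟨List.ofFn fun i : Fin (k + 1) => w (m + i), by simp, ?_⟩
  rw [← run_add, Nat.add_assoc]

theorem Weak.mem_F_of_frequently {M : DBA A Q} (hweak : M.Weak) {w : ℕ → A} {p q : Q}
    (hq : q ∈ M.F) (hqw : ∃ᶠ n in atTop, M.run w n = q) (hpw : ∃ᶠ n in atTop, M.run w n = p) :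
    p ∈ M.F := by
  obtain ⟨m, -, rfl⟩ := frequently_atTop.mp hpw 0
  obtain ⟨n, hmn, rfl⟩ := frequently_atTop.mp hqw (m + 1)
  obtain ⟨m', hnm', hm'⟩ := frequently_atTop.mp hpw (n + 1)
  rw [← hm']
  exact hweak _ hq _ (reach_run_of_lt M w hnm') (hm' ▸ reach_run_of_lt M w hmn)

theorem Weak.accepts_iff_of_run_eq_comp [Finite Q] {M : DBA A Q} (hweak : M.Weak)
    (M' : DBA B Q) (hF : M'.F = M.F) (v : ℕ → B) (w : ℕ → A) {s : ℕ → ℕ}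
    (hs : StrictMono s) (hrun : ∀ n, M'.run v n = M.run w (s n)) :
    M'.Accepts v ↔ M.Accepts w := by
  simp only [accepts_iff_frequently, hF, hrun]
  constructor
  · rintro ⟨q, hq, hqv⟩
    exact ⟨q, hq, hs.tendsto_atTop.frequently hqv⟩
  · rintro ⟨q, hq, hqw⟩
    obtain ⟨p, hpv⟩ : ∃ p, ∃ᶠ n in atTop, M.run w (s n) = p :=
      frequently_exists.mp (Frequently.of_forall fun n => ⟨_, rfl⟩)
    exact ⟨p, hweak.mem_F_of_frequently hq hqw (hs.tendsto_atTop.frequently hpv), hpv⟩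

end DBA

section Flatten

variable {A B : Type} (blk : A → List B) (v : ℕ → A)

def blockStart : ℕ → ℕ
  | 0 => 0
  | n + 1 => blockStart n + (blk (v n)).length

variable {blk}

theorem blockStart_strictMono (hblk : ∀ a, (blk a).length ≠ 0) :
    StrictMono (blockStart blk v) :=
  strictMono_nat_of_lt_succ fun n => Nat.lt_add_of_pos_right (Nat.pos_of_ne_zero (hblk (v n)))

theorem flatAux_succ {m n j : ℕ} (h : flatAux blk v m = (n, j)) :
    flatAux blk v (m + 1) = if j + 1 < (blk (v n)).length then (n, j + 1) else (n + 1, 0) := by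
  simp only [flatAux, h]

theorem flatAux_blockStart_add_of_eq {n : ℕ} (h : flatAux blk v (blockStart blk v n) = (n, 0))
    (j : ℕ) (hj : j < (blk (v n)).length) :
    flatAux blk v (blockStart blk v n + j) = (n, j) := by
  induction j with
  | zero => exact h
  | succ j ih => rw [← Nat.add_assoc, flatAux_succ v (ih (by omega)), if_pos hj]

theorem flatAux_blockStart (hblk : ∀ a, (blk a).length ≠ 0) (n : ℕ) :
    flatAux blk v (blockStart blk v n) = (n, 0) := by
  induction n with
  | zero => rfl
  | succ n ih =>
    have hlen := Nat.pos_of_ne_zero (hblk (v n))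
    have hlast := flatAux_blockStart_add_of_eq v ih _ (Nat.sub_lt hlen Nat.one_pos)
    rw [blockStart, ← Nat.sub_add_cancel hlen, ← Nat.add_assoc, flatAux_succ v hlast,
      if_neg (by omega)]

theorem flatten_blockStart_add [Inhabited B] (hblk : ∀ a, (blk a).length ≠ 0) (n : ℕ)
    (i : Fin (blk (v n)).length) :
    flatten blk v (blockStart blk v n + i) = (blk (v n))[i] := by
  rw [flatten, flatAux_blockStart_add_of_eq v (flatAux_blockStart v hblk n) i i.isLt,
    List.getD_eq_getElem]
  rfl

theorem DBA.run_eq_run_flatten_blockStart {Q : Type} [Inhabited B]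
    (hblk : ∀ a, (blk a).length ≠ 0) (M : DBA B Q) (M' : DBA A Q) (hinit : M'.init = M.init)
    (hdelta : ∀ q a, M'.delta q a = M.deltaStar q (blk a)) (n : ℕ) :
    M'.run v n = M.run (flatten blk v) (blockStart blk v n) := by
  induction n with
  | zero => exact hinit
  | succ n ih =>
    change M'.delta (M'.run v n) (v n) = _
    rw [ih, hdelta, blockStart, run_add]
    congr
    exact (List.ofFn_getElem).symm.trans
      (congrArg List.ofFn (funext fun i => (flatten_blockStart_add v hblk n i).symm))

end Flatten

theorem parBlock_length_ne_zero {b d : ℕ} (hd : 0 < d) (x : Option (Fin d → Fin b)) :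
    (parBlock x).length ≠ 0 := by
  cases x <;> simp [parBlock, hd.ne']

theorem parDBA_delta {Q : Type} {b d : ℕ} (M : DBA (Option (Fin b)) Q) (q : Q)
    (x : Option (Fin d → Fin b)) :
    (parDBA d M).delta q x = M.deltaStar q (parBlock x) := by
  cases x <;> rfl

theorem stmt3_general {Q : Type} [Fintype Q] {b d : ℕ} (hd : 0 < d)
    (M : DBA (Option (Fin b)) Q) (hweak : M.Weak)
    (v : ℕ → Option (Fin d → Fin b)) :
    (parDBA d M).Accepts v ↔ M.Accepts (seqWord v) := by
  have hblk := parBlock_length_ne_zero (b := b) hd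
  exact hweak.accepts_iff_of_run_eq_comp (parDBA d M) rfl v _ (blockStart_strictMono v hblk)
    (DBA.run_eq_run_flatten_blockStart v hblk M _ rfl (parDBA_delta M))

/-- `par(𝒜)` accepts `𝐯` iff `𝒜` accepts `seq(𝐯)`. -/
theorem stmt3 {Q : Type} [Fintype Q] {b d : ℕ} (hb : 2 ≤ b) (hd : 0 < d)
    (M : DBA (Option (Fin b)) Q) (hweak : M.Weak)
    (v : ℕ → Option (Fin d → Fin b)) :
    (parDBA d M).Accepts v ↔ M.Accepts (seqWord v) :=
  stmt3_general hd M hweak v
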